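/- arXiv:2005.08336 — 5 statements merged into one kernel-verified Lean document; each statement's English description precedes it below -/
import Mathlib

section
/- Let K = F_q(t) be the rational function field over a finite field F_q of characteristic > 3, let b, c ∈ F_q^* and suppose c has a cube root γ ∈ F_q and b has a cube root β ∈ F_q. Then for each k ∈ {0, 1, 2}, the point Q_k = (ω^k γ t / (b β), (t^2 + c t)/(2 b^2)) lies on the elliptic curve E_2 : y^2 = x^3 + t^2 ((t - c)/(2 b^2))^2 over K, Q_k ∈ E_2(F_q(t)), and Q_0 + Q_1 + Q_2 = O. -/
open Classical in
open WeierstrassCurve.Affine in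
/-- Over `K = F_q(t)` (char `F_q` > 3, with primitive cube root of unity `ω`, `β³ = b`,
`γ³ = c`), the points `Q_k = (ωᵏ γ t / (b β), (t² + c t)/(2b²))`, `k = 0, 1, 2`, lie on
the elliptic curve `E₂ : y² = x³ + t²((t - c)/(2b²))²` and sum to the identity. -/
theorem stmt_6 (F : Type*) [Field F] [Fintype F] (p : ℕ) (hp : p.Prime) (hp3 : 3 < p)
    [CharP F p] (ω : F) (hω : ω ^ 3 = 1) (hω1 : ω ≠ 1)
    (b c β γ : F) (hb : b ≠ 0) (hc : c ≠ 0) (hβ : β ^ 3 = b) (hγ : γ ^ 3 = c)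
    (W : WeierstrassCurve.Affine (RatFunc F))
    (hW : W = ⟨0, 0, 0, 0, RatFunc.X ^ 2 *
      ((RatFunc.X - RatFunc.C c) / (2 * RatFunc.C b ^ 2)) ^ 2⟩)
    (Qx : ℕ → RatFunc F)
    (hQx : ∀ k, Qx k = RatFunc.C (ω ^ k * γ) * RatFunc.X / RatFunc.C (b * β))
    (Qy : RatFunc F)
    (hQy : Qy = (RatFunc.X ^ 2 + RatFunc.C c * RatFunc.X) / (2 * RatFunc.C b ^ 2)) :
    (∀ k, W.Equation (Qx k) Qy) ∧
      ∀ (h₀ : W.Nonsingular (Qx 0) Qy) (h₁ : W.Nonsingular (Qx 1) Qy)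
        (h₂ : W.Nonsingular (Qx 2) Qy),
        Point.some _ _ h₀ + Point.some _ _ h₁ + Point.some _ _ h₂ = 0 := by
  have hinj : Function.Injective (RatFunc.C : F →+* RatFunc F) :=
    (RatFunc.C : F →+* RatFunc F).injective
  have hC : ∀ x : F, x ≠ 0 → RatFunc.C x ≠ 0 := by
    intro x hx h
    exact hx (hinj (by simpa using h))
  have h2 : (2 : F) ≠ 0 := by
    intro h
    have hdvd : p ∣ 2 := (CharP.cast_eq_zero_iff F p 2).mp (by exact_mod_cast h)
    have := Nat.le_of_dvd (by norm_num) hdvd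
    omega
  have h2R : (2 : RatFunc F) ≠ 0 := by
    have := hC 2 h2
    rwa [map_ofNat] at this
  have hγ0 : γ ≠ 0 := fun h => hc (by rw [← hγ, h]; ring)
  have hβ0 : β ≠ 0 := fun h => hb (by rw [← hβ, h]; ring)
  have hCb : RatFunc.C b ≠ 0 := hC b hb
  have hbβ : RatFunc.C (b * β) ≠ 0 := hC _ (mul_ne_zero hb hβ0)
  have hωs : ω ^ 2 + ω + 1 = 0 := by
    have h0 : (ω - 1) * (ω ^ 2 + ω + 1) = 0 := by linear_combination hω
    exact (mul_eq_zero.mp h0).resolve_left (sub_ne_zero.mpr hω1)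
  constructor
  · intro k
    have hxcube : (RatFunc.C (ω ^ k * γ) * RatFunc.X / RatFunc.C (b * β)) ^ 3
        = RatFunc.C c * RatFunc.X ^ 3 / RatFunc.C b ^ 4 := by
      have h1 : (ω ^ k * γ) ^ 3 = c := by
        rw [mul_pow, ← pow_mul, mul_comm k 3, pow_mul, hω, one_pow, one_mul, hγ]
      have h2' : (b * β) ^ 3 = b ^ 4 := by rw [mul_pow, hβ, ← pow_succ]
      rw [div_pow, mul_pow, ← map_pow, h1, ← map_pow, h2', map_pow]
    rw [hW, equation_iff]
    simp only [hQx, hQy]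
    rw [hxcube]
    field_simp
    ring
  · intro h₀ h₁ h₂
    have hXne : Qx 0 ≠ Qx 1 := by
      simp only [hQx]
      intro h
      rw [div_eq_div_iff hbβ hbβ] at h
      have h' := mul_right_cancel₀ hbβ h
      have h'' := hinj (mul_right_cancel₀ RatFunc.X_ne_zero h')
      simp only [pow_zero, pow_one, one_mul] at h''
      exact hω1 (mul_right_cancel₀ hγ0 (by rw [one_mul, ← h'']))
    have hsum : Qx 0 + Qx 1 + Qx 2 = 0 := by
      simp only [hQx]
      rw [← add_div, ← add_div, div_eq_zero_iff]
      left
      have h0 : ω ^ 0 * γ + ω ^ 1 * γ + ω ^ 2 * γ = 0 := by linear_combination γ * hωs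
      rw [← add_mul, ← add_mul, ← map_add, ← map_add, h0, map_zero, zero_mul]
    have hslope : W.slope (Qx 0) (Qx 1) Qy Qy = 0 := by
      rw [slope_of_X_ne hXne, sub_self, zero_div]
    have hx2 : W.addX (Qx 0) (Qx 1) (W.slope (Qx 0) (Qx 1) Qy Qy) = Qx 2 := by
      rw [hslope]
      simp only [WeierstrassCurve.Affine.addX, hW]
      linear_combination -hsum
    have hy2 : W.addY (Qx 0) (Qx 1) Qy (W.slope (Qx 0) (Qx 1) Qy Qy)
        = W.negY (Qx 2) Qy := by
      rw [hslope]
      simp only [WeierstrassCurve.Affine.addY, WeierstrassCurve.Affine.negAddY,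
        WeierstrassCurve.Affine.negY, WeierstrassCurve.Affine.addX, hW]
      ring
    rw [Point.add_of_X_ne hXne]
    exact Point.add_of_Y_eq hx2 hy2
end

section
/- Let K be a field of characteristic ≠ 2, 3, b, c ∈ K^* and suppose √c, ∛(4b) ∈ K. For each k ∈ {0, 1, 2}, the point P_k = (ω^k (t - c)/(-b·∛(4b)), √c (t - c)/(2b^2)) lies on the elliptic curve E_1 : y^2 = x^3 + t((t - c)/(2b^2))^2 over K(t), and P_0 + P_1 + P_2 = O. -/
/-!
The three points share the ordinate `y`, so they lie on the horizontal line `Y = y`. Their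
abscissae `x, ωx, ω²x` sum to `(1 + ω + ω²) x = 0 = -a₂`, so they are exactly the three
intersections of that line with the curve, and hence sum to `O`.

Whether `(ωᵏ x, y)` lies on `Y² = X³ + B` depends only on `x³`, which `ω` does not change. For
`x = (t - c)/(-b∛(4b))` we get `x³ = -(t - c)³/(4b⁴)`, so
`y² - x³ = (t - c)²(c + (t - c))/(4b⁴) = t((t - c)/(2b²))²`.
-/

section

variable {F : Type*} [Field F]

theorem ne_zero_of_pow_three_eq_four_mul {b u : F} (h2 : (2 : F) ≠ 0) (hb : b ≠ 0)
    (hu : u ^ 3 = 4 * b) : u ≠ 0 := by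
  rintro rfl
  have : 2 * 2 * b = 0 := by linear_combination -hu
  simp [h2, hb] at this

namespace WeierstrassCurve.Affine

theorem Point.some_add_some_add_some_of_Y_eq [DecidableEq F] {W : WeierstrassCurve.Affine F}
    {x₁ x₂ x₃ y : F} (h₁ : W.Nonsingular x₁ y) (h₂ : W.Nonsingular x₂ y)
    (h₃ : W.Nonsingular x₃ y) (hx : x₁ ≠ x₂) (hsum : x₁ + x₂ + x₃ = -W.a₂) :
    Point.some _ _ h₁ + Point.some _ _ h₂ + Point.some _ _ h₃ = 0 := by
  have hslope : W.slope x₁ x₂ y y = 0 := by rw [slope_of_X_ne hx, sub_self, zero_div]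
  suffices Point.some _ _ (nonsingular_negAdd h₁ h₂ fun h => hx h.1) = Point.some _ _ h₃ by
    rw [Point.add_of_X_ne' hx, this, neg_add_cancel]
  rw [Point.some.injEq, hslope, negAddY, addX]
  constructor
  · linear_combination -hsum
  · ring

theorem Point.some_add_some_add_some_of_cube_root_of_unity [DecidableEq F]
    {W : WeierstrassCurve.Affine F} (ha₂ : W.a₂ = 0) {ω x₀ x₁ x₂ y : F} (hω : ω ^ 3 = 1)
    (hω1 : ω ≠ 1) (hx₀ : x₀ ≠ 0) (hx₁ : x₁ = ω * x₀) (hx₂ : x₂ = ω ^ 2 * x₀)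
    (h₀ : W.Nonsingular x₀ y) (h₁ : W.Nonsingular x₁ y) (h₂ : W.Nonsingular x₂ y) :
    Point.some _ _ h₀ + Point.some _ _ h₁ + Point.some _ _ h₂ = 0 := by
  have hgeom : 1 + ω + ω ^ 2 = 0 := by
    have : (ω - 1) * (1 + ω + ω ^ 2) = 0 := by linear_combination hω
    exact (mul_eq_zero.mp this).resolve_left (sub_ne_zero.mpr hω1)
  refine Point.some_add_some_add_some_of_Y_eq h₀ h₁ h₂ ?_ ?_
  · rw [hx₁]
    exact fun h => hω1 (mul_right_cancel₀ hx₀ (by rw [one_mul]; exact h.symm))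
  · rw [ha₂, hx₁, hx₂]
    linear_combination x₀ * hgeom

theorem equation_mul_of_pow_three_eq_one (B x y ζ : F) (hζ : ζ ^ 3 = 1) :
    (WeierstrassCurve.toAffine ⟨0, 0, 0, 0, B⟩).Equation (ζ * x) y ↔
      (WeierstrassCurve.toAffine ⟨0, 0, 0, 0, B⟩).Equation x y := by
  simp only [equation_iff, mul_pow, hζ, one_mul, zero_mul, add_zero]

theorem equation_of_sq_eq_of_pow_three_eq (t b c r u : F) (h2 : (2 : F) ≠ 0) (hb : b ≠ 0)
    (hr : r ^ 2 = c) (hu : u ^ 3 = 4 * b) :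
    (WeierstrassCurve.toAffine ⟨0, 0, 0, 0, t * ((t - c) / (2 * b ^ 2)) ^ 2⟩).Equation
      ((t - c) / -(b * u)) (r * (t - c) / (2 * b ^ 2)) := by
  have hu0 := ne_zero_of_pow_three_eq_four_mul h2 hb hu
  rw [equation_iff]
  simp only [zero_mul, add_zero]
  field_simp
  linear_combination (t - c) ^ 2 * u ^ 3 * hr + (t - c) ^ 2 * (c - t) * hu

end WeierstrassCurve.Affine

end

open Classical in
open WeierstrassCurve.Affine in
theorem stmt_7_general (K : Type*) [Field K] (h2 : (2 : K) ≠ 0)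
    (ω : K) (hω : ω ^ 3 = 1) (hω1 : ω ≠ 1)
    (b c r u : K) (hb : b ≠ 0) (hr : r ^ 2 = c) (hu : u ^ 3 = 4 * b)
    (W : WeierstrassCurve.Affine (RatFunc K))
    (hW : W = ⟨0, 0, 0, 0, RatFunc.X *
      ((RatFunc.X - RatFunc.C c) / (2 * RatFunc.C b ^ 2)) ^ 2⟩)
    (Px : ℕ → RatFunc K)
    (hPx : ∀ k, Px k = RatFunc.C (ω ^ k) * (RatFunc.X - RatFunc.C c) / (-(RatFunc.C (b * u))))
    (Py : RatFunc K)
    (hPy : Py = RatFunc.C r * (RatFunc.X - RatFunc.C c) / (2 * RatFunc.C b ^ 2)) :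
    (∀ k, W.Equation (Px k) Py) ∧
      ∀ (h₀ : W.Nonsingular (Px 0) Py) (h₁ : W.Nonsingular (Px 1) Py)
        (h₂ : W.Nonsingular (Px 2) Py),
        Point.some _ _ h₀ + Point.some _ _ h₁ + Point.some _ _ h₂ = 0 := by
  open RatFunc in
  set x₀ : RatFunc K := (X - C c) / -(C b * C u)
  have hPx₀ : ∀ k, Px k = C ω ^ k * x₀ := fun k => by
    rw [hPx, map_pow, map_mul, mul_div_assoc]
  have hCω : C ω ^ 3 = (1 : RatFunc K) := by rw [← map_pow, hω, map_one]
  have hx₀ : x₀ ≠ 0 := by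
    have hs : (X - C c : RatFunc K) ≠ 0 := by
      rw [← algebraMap_X, ← algebraMap_C, ← map_sub]
      exact algebraMap_ne_zero (Polynomial.X_sub_C_ne_zero c)
    simp [x₀, hs, hb, ne_zero_of_pow_three_eq_four_mul h2 hb hu]
  refine ⟨fun k => ?_, fun h₀ h₁ h₂ => ?_⟩
  · rw [hW, hPx₀, hPy]
    refine (equation_mul_of_pow_three_eq_one _ _ _ _ ?_).mpr ?_
    · rw [← pow_mul, mul_comm, pow_mul, hCω, one_pow]
    · exact equation_of_sq_eq_of_pow_three_eq _ _ _ _ _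
        (by rw [← map_ofNat C 2]; exact (map_ne_zero C).mpr h2) ((map_ne_zero C).mpr hb)
        (by rw [← map_pow, hr]) (by rw [← map_pow, hu, map_mul, map_ofNat])
  · refine Point.some_add_some_add_some_of_cube_root_of_unity (by rw [hW]) hCω
      (by rw [← map_one C]; exact C.injective.ne hω1) (x₀ := Px 0)
      (by rwa [hPx₀, pow_zero, one_mul]) ?_ ?_ h₀ h₁ h₂ <;>
      simp only [hPx₀, pow_zero, pow_one, one_mul]

open Classical in
open WeierstrassCurve.Affine in
/-- Over `K(t)` (char `K` ≠ 2, 3, `ω` a primitive cube root of unity, `r² = c`,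
`u³ = 4b`), the points `P_k = (ωᵏ(t - c)/(-b·∛(4b)), √c·(t - c)/(2b²))`, `k = 0, 1, 2`,
lie on the elliptic curve `E₁ : y² = x³ + t((t - c)/(2b²))²` and sum to the identity. -/
theorem stmt_7 (K : Type*) [Field K] (h2 : (2 : K) ≠ 0) (h3 : (3 : K) ≠ 0)
    (ω : K) (hω : ω ^ 3 = 1) (hω1 : ω ≠ 1)
    (b c r u : K) (hb : b ≠ 0) (hc : c ≠ 0) (hr : r ^ 2 = c) (hu : u ^ 3 = 4 * b)
    (W : WeierstrassCurve.Affine (RatFunc K))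
    (hW : W = ⟨0, 0, 0, 0, RatFunc.X *
      ((RatFunc.X - RatFunc.C c) / (2 * RatFunc.C b ^ 2)) ^ 2⟩)
    (Px : ℕ → RatFunc K)
    (hPx : ∀ k, Px k = RatFunc.C (ω ^ k) * (RatFunc.X - RatFunc.C c) / (-(RatFunc.C (b * u))))
    (Py : RatFunc K)
    (hPy : Py = RatFunc.C r * (RatFunc.X - RatFunc.C c) / (2 * RatFunc.C b ^ 2)) :
    (∀ k, W.Equation (Px k) Py) ∧
      ∀ (h₀ : W.Nonsingular (Px 0) Py) (h₁ : W.Nonsingular (Px 1) Py)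
        (h₂ : W.Nonsingular (Px 2) Py),
        Point.some _ _ h₀ + Point.some _ _ h₁ + Point.some _ _ h₂ = 0 :=
  stmt_7_general K h2 ω hω hω1 b c r u hb hr hu W hW Px hPx Py hPy
end

section
/- Let K be a field of characteristic ≠ 2, 3 containing an element s with s^2 = -3, and let b, c ∈ K^* with a cube root γ of c in K. Then the map φ sending (x_0, x_1, t) with (x_1^3 - b)t^6 = c(x_0^3 - b) and x_0 γ ≠ t^2 x_1 to (x, y) with x = (t^6 - c)/(b(x_0 γ - t^2 x_1)) and y = (s(x_0 γ + t^2 x_1)/(-2b))·x, produces a point satisfying y^2 = x^3 + ((t^6 - c)/(2b^2))^2. -/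
/-!
With `u = x₀γ` and `v = t²x₁`, the surface equation together with `γ³ = c` says
`b(t⁶ - c) = v³ - u³ = -(u - v)(u² + uv + v²)`. Dividing by the nonzero factor `u - v`
gives `b²x = -(u² + uv + v²)` and `(t⁶ - c)/(2b²) = (u - v)x/(2b)`, after which the curve
equation reduces to the identity `-3(u + v)² - (u - v)² = -4(u² + uv + v²)`, where `s² = -3`
supplies the coefficient `-3`.
-/

theorem sq_eq_cube_add_sq_of_mul_eq_neg_norm {K : Type*} [Field K] (h2 : (2 : K) ≠ 0)
    {s : K} (hs : s ^ 2 = -3) {b : K} (hb : b ≠ 0) {u v x : K}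
    (hx : b ^ 2 * x = -(u ^ 2 + u * v + v ^ 2)) :
    (s * (u + v) / (-(2 * b)) * x) ^ 2 = x ^ 3 + ((u - v) * x / (2 * b)) ^ 2 := by
  field_simp
  linear_combination (u + v) ^ 2 * x ^ 2 * hs - 4 * x ^ 2 * hx

theorem cube_sub_cube_eq_of_surface {K : Type*} [Field K] {b c γ x₀ x₁ t : K}
    (hγ : γ ^ 3 = c) (hsurf : (x₁ ^ 3 - b) * t ^ 6 = c * (x₀ ^ 3 - b)) :
    (t ^ 2 * x₁) ^ 3 - (x₀ * γ) ^ 3 = b * (t ^ 6 - c) := by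
  linear_combination hsurf - x₀ ^ 3 * hγ

theorem stmt_8_general (K : Type*) [Field K] (h2 : (2 : K) ≠ 0)
    (s : K) (hs : s ^ 2 = -3) (b c γ : K) (hb : b ≠ 0) (hγ : γ ^ 3 = c)
    (x₀ x₁ t : K) (hsurf : (x₁ ^ 3 - b) * t ^ 6 = c * (x₀ ^ 3 - b))
    (hden : x₀ * γ - t ^ 2 * x₁ ≠ 0)
    (x y : K) (hx : x = (t ^ 6 - c) / (b * (x₀ * γ - t ^ 2 * x₁)))
    (hy : y = s * (x₀ * γ + t ^ 2 * x₁) / (-(2 * b)) * x) :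
    y ^ 2 = x ^ 3 + ((t ^ 6 - c) / (2 * b ^ 2)) ^ 2 := by
  have hbx : b * (x₀ * γ - t ^ 2 * x₁) * x = t ^ 6 - c := by
    rw [hx]
    field_simp
  have hnorm : b ^ 2 * x = -((x₀ * γ) ^ 2 + x₀ * γ * (t ^ 2 * x₁) + (t ^ 2 * x₁) ^ 2) := by
    refine mul_left_cancel₀ hden ?_
    linear_combination b * hbx - cube_sub_cube_eq_of_surface hγ hsurf
  have hconst : (t ^ 6 - c) / (2 * b ^ 2) = (x₀ * γ - t ^ 2 * x₁) * x / (2 * b) := by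
    rw [← hbx]
    field_simp
  rw [hy, hconst]
  exact sq_eq_cube_add_sq_of_mul_eq_neg_norm h2 hs hb hnorm

/-- Forward direction of the birational map `φ : K₆ → E`: an affine point
`(x₀, x₁, t)` of the surface `(x₁³ - b)t⁶ = c(x₀³ - b)` with `x₀γ - t²x₁ ≠ 0`
maps to a point of the Weierstrass curve `y² = x³ + ((t⁶ - c)/(2b²))²`. -/
theorem stmt_8 (K : Type*) [Field K] (h2 : (2 : K) ≠ 0) (h3 : (3 : K) ≠ 0)
    (s : K) (hs : s ^ 2 = -3) (b c γ : K) (hb : b ≠ 0) (hc : c ≠ 0) (hγ : γ ^ 3 = c)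
    (x₀ x₁ t : K) (hsurf : (x₁ ^ 3 - b) * t ^ 6 = c * (x₀ ^ 3 - b))
    (hden : x₀ * γ - t ^ 2 * x₁ ≠ 0)
    (x y : K) (hx : x = (t ^ 6 - c) / (b * (x₀ * γ - t ^ 2 * x₁)))
    (hy : y = s * (x₀ * γ + t ^ 2 * x₁) / (-(2 * b)) * x) :
    y ^ 2 = x ^ 3 + ((t ^ 6 - c) / (2 * b ^ 2)) ^ 2 :=
  stmt_8_general K h2 s hs b c γ hb hγ x₀ x₁ t hsurf hden x y hx hy
end

section
/- Let K be a field of characteristic ≠ 2, 3 with s ∈ K, s^2 = -3, b, c ∈ K^*, γ^3 = c. Then the map ψ sending (x, y) with y^2 = x^3 + ((t^6 - c)/(2b^2))^2 and x ≠ 0, t ≠ 0 to x_0 = (2b^2 y - s(t^6 - c))/(-2s·b·γ·x) and x_1 = (2b^2 y + s(t^6 - c))/(-2s·b·t^2·x), produces a point satisfying (x_1^3 - b)t^6 = c(x_0^3 - b). -/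
/-- Inverse direction of the birational map `ψ : E → K₆`: a point `(x, y)` of the
Weierstrass curve `y² = x³ + ((t⁶ - c)/(2b²))²` with `x ≠ 0`, `t ≠ 0` maps to an
affine point of the surface `(x₁³ - b)t⁶ = c(x₀³ - b)`. -/
theorem stmt_9 (K : Type*) [Field K] (h2 : (2 : K) ≠ 0) (h3 : (3 : K) ≠ 0)
    (s : K) (hs : s ^ 2 = -3) (b c γ : K) (hb : b ≠ 0) (hc : c ≠ 0) (hγ : γ ^ 3 = c)
    (x y t : K) (hcurve : y ^ 2 = x ^ 3 + ((t ^ 6 - c) / (2 * b ^ 2)) ^ 2)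
    (hx : x ≠ 0) (ht : t ≠ 0)
    (x₀ x₁ : K)
    (hx₀ : x₀ = (2 * b ^ 2 * y - s * (t ^ 6 - c)) / (-(2 * s * b * γ * x)))
    (hx₁ : x₁ = (2 * b ^ 2 * y + s * (t ^ 6 - c)) / (-(2 * s * b * t ^ 2 * x))) :
    (x₁ ^ 3 - b) * t ^ 6 = c * (x₀ ^ 3 - b) := by
  have hs0 : s ≠ 0 := by
    intro h
    rw [h] at hs
    have : (3 : K) = 0 := by linear_combination hs
    exact h3 this
  have hγ0 : γ ≠ 0 := fun h => hc (by rw [← hγ, h]; ring)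
  have hb2 : (2 * b ^ 2 : K) ≠ 0 := mul_ne_zero h2 (pow_ne_zero _ hb)
  have hcurve' : y ^ 2 * (2 * b ^ 2) ^ 2 = x ^ 3 * (2 * b ^ 2) ^ 2 + (t ^ 6 - c) ^ 2 := by
    field_simp at hcurve
    linear_combination hcurve
  have hD0 : (-(2 * s * b * γ * x) : K) ≠ 0 := by
    simp only [neg_ne_zero]
    exact mul_ne_zero (mul_ne_zero (mul_ne_zero (mul_ne_zero h2 hs0) hb) hγ0) hx
  have hD1 : (-(2 * s * b * t ^ 2 * x) : K) ≠ 0 := by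
    simp only [neg_ne_zero]
    exact mul_ne_zero (mul_ne_zero (mul_ne_zero (mul_ne_zero h2 hs0) hb) (pow_ne_zero _ ht)) hx
  have f0 : x₀ ^ 3 * (-(2 * s * b * γ * x)) ^ 3 = (2 * b ^ 2 * y - s * (t ^ 6 - c)) ^ 3 := by
    rw [← mul_pow, hx₀, div_mul_cancel₀ _ hD0]
  have f1 : x₁ ^ 3 * (-(2 * s * b * t ^ 2 * x)) ^ 3 = (2 * b ^ 2 * y + s * (t ^ 6 - c)) ^ 3 := by
    rw [← mul_pow, hx₁, div_mul_cancel₀ _ hD1]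
  have hM : (24 * s * b ^ 3 * x ^ 3 : K) ≠ 0 := by
    apply mul_ne_zero (mul_ne_zero (mul_ne_zero _ hs0) (pow_ne_zero _ hb)) (pow_ne_zero _ hx)
    have : (24 : K) = 2 ^ 3 * 3 := by norm_num
    rw [this]
    exact mul_ne_zero (pow_ne_zero _ h2) h3
  have key : ((x₁ ^ 3 - b) * t ^ 6 - c * (x₀ ^ 3 - b)) * (24 * s * b ^ 3 * x ^ 3) = 0 := by
    linear_combination f1 - f0 +
      (8 * s * b ^ 3 * t ^ 6 * x ^ 3 * x₁ ^ 3 - 8 * s * b ^ 3 * x ^ 3 * x₀ ^ 3 * γ ^ 3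
        + 2 * s * (t ^ 6 - c) ^ 3) * hs +
      (24 * s * b ^ 3 * x ^ 3 * x₀ ^ 3) * hγ +
      (6 * s * (t ^ 6 - c)) * hcurve'
  have := (mul_eq_zero.mp key).resolve_right hM
  linear_combination this
end

section
/- Let K be a field of characteristic ≠ 2, 3, s^2 = -3, b, c ∈ K^*, γ^3 = c. The maps φ and ψ (from the birational correspondence between K_6 : (x_1^3 - b)t^6 = c(x_0^3 - b) and E : y^2 = x^3 + ((t^6 - c)/(2b^2))^2) are mutually inverse on their domains of definition: ψ(φ(x_0, x_1, t)) = (x_0, x_1, t) whenever both sides are defined. -/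
/-! `φ` records the difference `x₀γ - t²x₁ = (t⁶ - c)/(b x)` in `x` and the sum
`x₀γ + t²x₁ = -2b y/(s x)` in `y`; `ψ` recovers `x₀γ` and `t²x₁` as half their sum and half their
difference. -/

section

variable {K : Type*} [Field K]

lemma ne_zero_of_sq_eq_neg_three {s : K} (h3 : (3 : K) ≠ 0) (hs : s ^ 2 = -3) : s ≠ 0 := by
  rintro rfl
  exact h3 (neg_eq_zero.mp (by simpa using hs.symm))

lemma div_eq_of_eq_sum_and_difference {s b p q x₀ x₁ x y d : K} (h2 : (2 : K) ≠ 0)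
    (hs : s ≠ 0) (hb : b ≠ 0) (hp : p ≠ 0) (hq : q ≠ 0) (hx : x ≠ 0)
    (hd : d = x * (b * (x₀ * p - q * x₁))) (hy : y = s * (x₀ * p + q * x₁) / (-(2 * b)) * x) :
    (2 * b ^ 2 * y - s * d) / (-(2 * s * b * p * x)) = x₀ ∧
      (2 * b ^ 2 * y + s * d) / (-(2 * s * b * q * x)) = x₁ := by
  subst hy hd
  constructor
  · rw [div_eq_iff (by simp [h2, hs, hb, hp, hx])]
    field_simp
    ring
  · rw [div_eq_iff (by simp [h2, hs, hb, hq, hx])]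
    field_simp
    ring

end

theorem stmt_10_general (K : Type*) [Field K] (h2 : (2 : K) ≠ 0) (h3 : (3 : K) ≠ 0)
    (s : K) (hs : s ^ 2 = -3) (b c γ : K) (hb : b ≠ 0) (hc : c ≠ 0) (hγ : γ ^ 3 = c)
    (x₀ x₁ t : K)
    (hden : x₀ * γ - t ^ 2 * x₁ ≠ 0) (ht : t ≠ 0) (htc : t ^ 6 ≠ c)
    (x y : K) (hx : x = (t ^ 6 - c) / (b * (x₀ * γ - t ^ 2 * x₁)))
    (hy : y = s * (x₀ * γ + t ^ 2 * x₁) / (-(2 * b)) * x) :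
    (2 * b ^ 2 * y - s * (t ^ 6 - c)) / (-(2 * s * b * γ * x)) = x₀ ∧
      (2 * b ^ 2 * y + s * (t ^ 6 - c)) / (-(2 * s * b * t ^ 2 * x)) = x₁ := by
  have hbd : b * (x₀ * γ - t ^ 2 * x₁) ≠ 0 := mul_ne_zero hb hden
  have hx0 : x ≠ 0 := hx ▸ div_ne_zero (sub_ne_zero.mpr htc) hbd
  have hdiff : t ^ 6 - c = x * (b * (x₀ * γ - t ^ 2 * x₁)) := by
    rw [hx, div_mul_cancel₀ _ hbd]
  exact div_eq_of_eq_sum_and_difference h2 (ne_zero_of_sq_eq_neg_three h3 hs) hb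
    (ne_zero_pow three_ne_zero (hγ ▸ hc)) (pow_ne_zero 2 ht) hx0 hdiff hy

/-- The maps `φ` and `ψ` of the birational correspondence between
`K₆ : (x₁³ - b)t⁶ = c(x₀³ - b)` and `E : y² = x³ + ((t⁶ - c)/(2b²))²` are mutually
inverse where defined: `ψ(φ(x₀, x₁, t)) = (x₀, x₁, t)`. -/
theorem stmt_10 (K : Type*) [Field K] (h2 : (2 : K) ≠ 0) (h3 : (3 : K) ≠ 0)
    (s : K) (hs : s ^ 2 = -3) (b c γ : K) (hb : b ≠ 0) (hc : c ≠ 0) (hγ : γ ^ 3 = c)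
    (x₀ x₁ t : K) (hsurf : (x₁ ^ 3 - b) * t ^ 6 = c * (x₀ ^ 3 - b))
    (hden : x₀ * γ - t ^ 2 * x₁ ≠ 0) (ht : t ≠ 0) (htc : t ^ 6 ≠ c)
    (x y : K) (hx : x = (t ^ 6 - c) / (b * (x₀ * γ - t ^ 2 * x₁)))
    (hy : y = s * (x₀ * γ + t ^ 2 * x₁) / (-(2 * b)) * x) :
    (2 * b ^ 2 * y - s * (t ^ 6 - c)) / (-(2 * s * b * γ * x)) = x₀ ∧
      (2 * b ^ 2 * y + s * (t ^ 6 - c)) / (-(2 * s * b * t ^ 2 * x)) = x₁ :=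
  stmt_10_general K h2 h3 s hs b c γ hb hc hγ x₀ x₁ t hden ht htc x y hx hy
end
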